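/- arXiv:2307.16558 — 12 statements merged into one kernel-verified Lean document; each statement's English description precedes it below -/
import Mathlib

section
/- Let C be a category, M a class of morphisms of C, T an object of C, and (𝒢, G, g) an M-grading of T. Given any two morphisms of gradings (F, f) and (F', f') from (𝒢, G, g) into the canonical grading — i.e. functors F, F' : 𝒢 ⥤ M/T with natural isomorphisms f : (F ⋙ dom) ≅ G and f' : (F' ⋙ dom) ≅ G such that for each d the composite of f_d (resp. f'_d) with g_d equals the structure morphism of F d (resp. F' d) — there exists a natural isomorphism β : F' ≅ F such that for every object d of 𝒢, the image of β_d under dom composed with f_d equals f'_d. -/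
open CategoryTheory

universe v u v' u'

/-- The `M`-slice category `M/T`: the full subcategory of the slice category over `T`
on objects whose structure morphism lies in `M`. -/
abbrev MSlice {C : Type u} [Category.{v} C] (M : MorphismProperty C) (T : C) :=
  ObjectProperty.FullSubcategory (fun f : Over T => M f.hom)

/-- The domain functor `M/T ⥤ C`, sending `(S, s : S ⟶ T)` to `S`. -/
abbrev MSliceDom {C : Type u} [Category.{v} C] (M : MorphismProperty C) (T : C) :
    MSlice M T ⥤ C :=
  ObjectProperty.ι _ ⋙ Over.forget T

namespace MSlice

variable {C : Type u} [Category.{v} C] {M : MorphismProperty C} {T : C}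
  {𝒢 : Type u'} [Category.{v'} 𝒢]

def isoMk {X Y : MSlice M T} (e : X.obj.left ≅ Y.obj.left)
    (w : e.hom ≫ Y.obj.hom = X.obj.hom) : X ≅ Y :=
  ObjectProperty.isoMk _ (Over.isoMk e w)

def liftNatIso {F F' : 𝒢 ⥤ MSlice M T} (e : F' ⋙ MSliceDom M T ≅ F ⋙ MSliceDom M T)
    (w : ∀ d, e.hom.app d ≫ (F.obj d).obj.hom = (F'.obj d).obj.hom) : F' ≅ F :=
  NatIso.ofComponents (fun d => isoMk (e.app d) (w d)) fun u =>
    (MSliceDom M T).map_injective (e.hom.naturality u)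

@[simp]
lemma dom_map_liftNatIso_hom_app {F F' : 𝒢 ⥤ MSlice M T}
    (e : F' ⋙ MSliceDom M T ≅ F ⋙ MSliceDom M T)
    (w : ∀ d, e.hom.app d ≫ (F.obj d).obj.hom = (F'.obj d).obj.hom) (d : 𝒢) :
    (MSliceDom M T).map ((liftNatIso e w).hom.app d) = e.hom.app d :=
  rfl

end MSlice

theorem stmt1_general {C : Type u} [Category.{v} C] (M : MorphismProperty C) (T : C)
    {𝒢 : Type u'} [Category.{v'} 𝒢] (G : 𝒢 ⥤ C)
    (g : G ⟶ (Functor.const 𝒢).obj T)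
    (F F' : 𝒢 ⥤ MSlice M T)
    (f : (F ⋙ MSliceDom M T) ≅ G) (f' : (F' ⋙ MSliceDom M T) ≅ G)
    (hf : ∀ d : 𝒢, f.hom.app d ≫ g.app d = ((F.obj d).obj).hom)
    (hf' : ∀ d : 𝒢, f'.hom.app d ≫ g.app d = ((F'.obj d).obj).hom) :
    ∃ β : F' ≅ F,
      ∀ d : 𝒢, (MSliceDom M T).map (β.hom.app d) ≫ f.hom.app d = f'.hom.app d := by
  have w : ∀ d, (f' ≪≫ f.symm).hom.app d ≫ (F.obj d).obj.hom = (F'.obj d).obj.hom := fun d => by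
    rw [← hf d, ← hf' d, Iso.trans_hom, Iso.symm_hom, NatTrans.comp_app, Category.assoc,
      Iso.inv_hom_id_app_assoc]
  refine ⟨MSlice.liftNatIso (f' ≪≫ f.symm) w, fun d => ?_⟩
  rw [MSlice.dom_map_liftNatIso_hom_app, Iso.trans_hom, Iso.symm_hom, NatTrans.comp_app,
    Category.assoc, Iso.inv_hom_id_app, Category.comp_id]

/-- Any two morphisms of gradings from an `M`-grading `(𝒢, G, g)` of `T` into the canonical
grading are isomorphic: there is a natural isomorphism `β : F' ≅ F` compatible with `f, f'`. -/
theorem stmt1 {C : Type u} [Category.{v} C] (M : MorphismProperty C) (T : C)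
    {𝒢 : Type u'} [Category.{v'} 𝒢] (G : 𝒢 ⥤ C)
    (g : G ⟶ (Functor.const 𝒢).obj T)
    (hg : ∀ d : 𝒢, M (g.app d))
    (F F' : 𝒢 ⥤ MSlice M T)
    (f : (F ⋙ MSliceDom M T) ≅ G) (f' : (F' ⋙ MSliceDom M T) ≅ G)
    (hf : ∀ d : 𝒢, f.hom.app d ≫ g.app d = ((F.obj d).obj).hom)
    (hf' : ∀ d : 𝒢, f'.hom.app d ≫ g.app d = ((F'.obj d).obj).hom) :
    ∃ β : F' ≅ F,
      ∀ d : 𝒢, (MSliceDom M T).map (β.hom.app d) ≫ f.hom.app d = f'.hom.app d :=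
  stmt1_general M T G g F F' f f' hf hf'
end

section
/- Let D be a category with pullbacks equipped with an orthogonal factorization system (E, M), and let A be a category with a terminal object ⊤. Then every natural transformation τ : F ⟶ G between functors F, G : A ⥤ D factors as τ = m ∘ e where e : F ⟶ S is a natural transformation with component e_⊤ ∈ E, and m : S ⟶ G is a cartesian natural transformation with component m_⊤ ∈ M. -/
/-!
Factor the terminal component `τ_⊤ = e₀ ≫ m₀` with `e₀ ∈ E`, `m₀ ∈ M`, and let `S X` be the pullback
of `m₀ : Z ⟶ G ⊤` along `G (X ⟶ ⊤)`. The projections `S ⟶ G` form a cartesian transformation by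
the pasting lemma, `τ` lifts through it by the universal property, and at `⊤` the pullback is taken
along an isomorphism, so its two components there agree with `e₀` and `m₀` up to isomorphism.
-/

open CategoryTheory Limits

universe v u v' u'

/-- An orthogonal factorization system `(E, M)` on a category. -/
structure IsOFS {C : Type u} [Category.{v} C] (E M : MorphismProperty C) : Prop where
  isoE : ∀ {X Y : C} (f : X ⟶ Y), IsIso f → E f
  isoM : ∀ {X Y : C} (f : X ⟶ Y), IsIso f → M f
  compE : ∀ {X Y Z : C} (f : X ⟶ Y) (g : Y ⟶ Z), E f → E g → E (f ≫ g)
  compM : ∀ {X Y Z : C} (f : X ⟶ Y) (g : Y ⟶ Z), M f → M g → M (f ≫ g)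
  fac : ∀ {X Y : C} (f : X ⟶ Y), ∃ (Z : C) (e : X ⟶ Z) (m : Z ⟶ Y), E e ∧ M m ∧ e ≫ m = f
  orth : ∀ {X Y X' Y' : C} (e : X ⟶ Y) (m : X' ⟶ Y') (u : X ⟶ X') (v : Y ⟶ Y'),
    E e → M m → u ≫ m = e ≫ v → ∃! d : Y ⟶ X', e ≫ d = u ∧ d ≫ m = v

/-- A natural transformation is cartesian when all its naturality squares are pullbacks. -/
def IsCartesianNT {A : Type u'} [Category.{v'} A] {D : Type u} [Category.{v} D]
    {F G : A ⥤ D} (τ : F ⟶ G) : Prop :=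
  ∀ {X Y : A} (f : X ⟶ Y), IsPullback (F.map f) (τ.app X) (τ.app Y) (G.map f)

namespace IsOFS

variable {C : Type u} [Category.{v} C] {E M : MorphismProperty C}

theorem respectsIso_left (h : IsOFS E M) : E.RespectsIso :=
  .mk _ (fun _ _ hf => h.compE _ _ (h.isoE _ inferInstance) hf)
    (fun _ _ hf => h.compE _ _ hf (h.isoE _ inferInstance))

theorem respectsIso_right (h : IsOFS E M) : M.RespectsIso :=
  .mk _ (fun _ _ hf => h.compM _ _ (h.isoM _ inferInstance) hf)
    (fun _ _ hf => h.compM _ _ hf (h.isoM _ inferInstance))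

end IsOFS

theorem terminal.from_terminal {A : Type u'} [Category.{v'} A] [HasTerminal A] :
    terminal.from (⊤_ A) = 𝟙 _ :=
  terminal.hom_ext _ _

instance terminal.isIso_from_terminal {A : Type u'} [Category.{v'} A] [HasTerminal A] :
    IsIso (terminal.from (⊤_ A)) := by
  rw [terminal.from_terminal]
  infer_instance

section terminalPullback

variable {A : Type u'} [Category.{v'} A] [HasTerminal A] {D : Type u} [Category.{v} D]
  [HasPullbacks D] (G : A ⥤ D) {Z : D} (m₀ : Z ⟶ G.obj (⊤_ A))

attribute [local simp] pullback.lift_fst pullback.lift_snd pullback.lift_fst_assoc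
  pullback.lift_snd_assoc

-- Reducible, so that the `pullback` API applies to its objects and maps.
noncomputable abbrev terminalPullback : A ⥤ D where
  obj X := pullback (G.map (terminal.from X)) m₀
  map {X Y} f := pullback.lift (pullback.fst _ _ ≫ G.map f) (pullback.snd _ _)
    (by rw [Category.assoc, ← G.map_comp, terminal.comp_from, pullback.condition])
  map_id _ := by ext <;> simp
  map_comp f g := by ext <;> simp

namespace terminalPullback

theorem map_snd {X Y : A} (f : X ⟶ Y) :
    (terminalPullback G m₀).map f ≫ pullback.snd _ _ = pullback.snd _ _ := by
  simp

theorem map_fst {X Y : A} (f : X ⟶ Y) :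
    (terminalPullback G m₀).map f ≫ pullback.fst _ _ = pullback.fst _ _ ≫ G.map f := by
  simp

@[simps app]
noncomputable def fst : terminalPullback G m₀ ⟶ G where
  app _ := pullback.fst _ _
  naturality _ _ f := map_fst G m₀ f

theorem isCartesianNT_fst : IsCartesianNT (fst G m₀) := by
  intro X Y f
  have hOuter : IsPullback ((terminalPullback G m₀).map f ≫ pullback.snd _ _)
      (pullback.fst _ _) m₀ (G.map f ≫ G.map (terminal.from Y)) := by
    rw [map_snd, ← G.map_comp, terminal.comp_from]
    exact (IsPullback.of_hasPullback _ _).flip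
  exact .of_right hOuter (map_fst G m₀ f) (IsPullback.of_hasPullback _ _).flip

variable {G m₀} {F : A ⥤ D} (τ : F ⟶ G) (e₀ : F.obj (⊤_ A) ⟶ Z) (w : e₀ ≫ m₀ = τ.app (⊤_ A))

@[simps app]
noncomputable def lift : F ⟶ terminalPullback G m₀ where
  app X := pullback.lift (τ.app X) (F.map (terminal.from X) ≫ e₀)
    (by rw [← τ.naturality, Category.assoc, w])
  naturality _ _ f := by
    apply pullback.hom_ext
    · simp
    · simp [← F.map_comp_assoc]

theorem lift_comp_fst : lift τ e₀ w ≫ fst G m₀ = τ := by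
  ext X
  simp

theorem lift_app_terminal_comp_snd : (lift τ e₀ w).app (⊤_ A) ≫ pullback.snd _ _ = e₀ := by
  simp [terminal.from_terminal]

end terminalPullback

end terminalPullback

open terminalPullback in
/-- Every natural transformation `τ : F ⟶ G` between functors `A ⥤ D` factors as a natural
transformation `e` whose component at the terminal object is in `E`, followed by a cartesian
natural transformation `m` whose component at the terminal object is in `M`. -/
theorem stmt4 {A : Type u'} [Category.{v'} A] [HasTerminal A]
    {D : Type u} [Category.{v} D] [HasPullbacks D]
    (E M : MorphismProperty D) (h : IsOFS E M)
    {F G : A ⥤ D} (τ : F ⟶ G) :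
    ∃ (S : A ⥤ D) (e : F ⟶ S) (m : S ⟶ G),
      e ≫ m = τ ∧ E (e.app (⊤_ A)) ∧ IsCartesianNT m ∧ M (m.app (⊤_ A)) := by
  obtain ⟨Z, e₀, m₀, he₀, hm₀, w⟩ := h.fac (τ.app (⊤_ A))
  have := h.respectsIso_left
  have := h.respectsIso_right
  refine ⟨terminalPullback G m₀, lift τ e₀ w, fst G m₀, lift_comp_fst τ e₀ w, ?_,
    isCartesianNT_fst G m₀, ?_⟩
  · rw [← E.cancel_right_of_respectsIso _ (pullback.snd _ _), lift_app_terminal_comp_snd]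
    exact he₀
  · rw [fst_app, ← M.cancel_right_of_respectsIso _ (G.map (terminal.from (⊤_ A))),
      pullback.condition, M.cancel_left_of_respectsIso]
    exact hm₀
end

section
/- Let D be a category with pullbacks equipped with an orthogonal factorization system (E, M), and let A be a category with a terminal object ⊤. Let e : F ⟶ F' be a natural transformation between functors A ⥤ D with e_⊤ ∈ E, and let m : S ⟶ G be a cartesian natural transformation with m_⊤ ∈ M. Then for all natural transformations u : F ⟶ S and v : F' ⟶ G with m ∘ u = v ∘ e, there exists a unique natural transformation d : F' ⟶ S such that d ∘ e = u and m ∘ d = v. -/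
/-!
Lift at the terminal object `⊤` with the factorization system, then extend the lift to every
object `X`: since `m` is cartesian, `S X` is the pullback of `m_⊤` along `G X → G ⊤`, so a map
into `S X` is the same as a compatible pair of maps into `S ⊤` and `G X`. The same pullbacks
show that a transformation into `S` is determined by its composite with `m` and its
component at `⊤`, which gives uniqueness.
-/

open CategoryTheory Limits

universe v u v' u'

namespace IsCartesianNT

variable {A : Type u'} [Category.{v'} A] {D : Type u} [Category.{v} D]

theorem hom_ext {H S G : A ⥤ D} {m : S ⟶ G} (hm : IsCartesianNT m) {T : A} (hT : IsTerminal T)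
    {d d' : H ⟶ S} (hdm : d ≫ m = d' ≫ m) (hdT : d.app T = d'.app T) : d = d' := by
  ext X
  apply (hm (hT.from X)).hom_ext
  · rw [← d.naturality, ← d'.naturality, hdT]
  · exact congr_app hdm X

section lift

variable {F' S G : A ⥤ D} {m : S ⟶ G} (hm : IsCartesianNT m) {T : A} (hT : IsTerminal T)
  (v : F' ⟶ G) (d₀ : F'.obj T ⟶ S.obj T) (hd₀ : d₀ ≫ m.app T = v.app T)

noncomputable def liftApp (X : A) : F'.obj X ⟶ S.obj X :=
  (hm (hT.from X)).lift (F'.map (hT.from X) ≫ d₀) (v.app X)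
    (by rw [Category.assoc, hd₀, v.naturality])

theorem liftApp_comp_map {X : A} (g : X ⟶ T) :
    liftApp hm hT v d₀ hd₀ X ≫ S.map g = F'.map g ≫ d₀ := by
  rw [hT.hom_ext g (hT.from X)]
  exact IsPullback.lift_fst ..

theorem liftApp_comp_app (X : A) : liftApp hm hT v d₀ hd₀ X ≫ m.app X = v.app X :=
  IsPullback.lift_snd ..

noncomputable def lift : F' ⟶ S where
  app := liftApp hm hT v d₀ hd₀
  naturality X Y f := by
    apply (hm (hT.from Y)).hom_ext
    · simp only [Category.assoc, liftApp_comp_map, ← S.map_comp, ← F'.map_comp_assoc]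
    · rw [Category.assoc, Category.assoc, liftApp_comp_app, m.naturality, ← Category.assoc,
        liftApp_comp_app, v.naturality]

theorem lift_comp : lift hm hT v d₀ hd₀ ≫ m = v := by
  ext X
  exact liftApp_comp_app hm hT v d₀ hd₀ X

theorem lift_app_terminal : (lift hm hT v d₀ hd₀).app T = d₀ := by
  show liftApp hm hT v d₀ hd₀ T = d₀
  simpa using liftApp_comp_map hm hT v d₀ hd₀ (𝟙 T)

end lift

end IsCartesianNT

theorem stmt5_general {A : Type u'} [Category.{v'} A] [HasTerminal A]
    {D : Type u} [Category.{v} D]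
    (E M : MorphismProperty D) (h : IsOFS E M)
    {F F' S G : A ⥤ D}
    (e : F ⟶ F') (he : E (e.app (⊤_ A)))
    (m : S ⟶ G) (hmcart : IsCartesianNT m) (hm : M (m.app (⊤_ A)))
    (u : F ⟶ S) (v : F' ⟶ G) (huv : u ≫ m = e ≫ v) :
    ∃! d : F' ⟶ S, e ≫ d = u ∧ d ≫ m = v := by
  obtain ⟨d₀, ⟨hed₀, hd₀m⟩, hd₀_unique⟩ :=
    h.orth (e.app (⊤_ A)) (m.app (⊤_ A)) (u.app (⊤_ A)) (v.app (⊤_ A)) he hm (congr_app huv _)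
  have hT := terminalIsTerminal (C := A)
  have hd_top := hmcart.lift_app_terminal hT v d₀ hd₀m
  have hdm := hmcart.lift_comp hT v d₀ hd₀m
  refine ⟨hmcart.lift hT v d₀ hd₀m, ⟨?_, hdm⟩, fun d ⟨hed, hdm'⟩ => ?_⟩
  · refine hmcart.hom_ext hT ?_ ?_
    · rw [Category.assoc, hdm, huv]
    · rw [NatTrans.comp_app, hd_top, hed₀]
  · refine hmcart.hom_ext hT (by rw [hdm, hdm']) ?_
    rw [hd_top]
    exact hd₀_unique _ ⟨congr_app hed _, congr_app hdm' _⟩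

/-- Orthogonality for the factorization system of Lemma 3.2: natural transformations whose
component at the terminal object is in `E` are orthogonal to cartesian natural transformations
whose component at the terminal object is in `M`. -/
theorem stmt5 {A : Type u'} [Category.{v'} A] [HasTerminal A]
    {D : Type u} [Category.{v} D] [HasPullbacks D]
    (E M : MorphismProperty D) (h : IsOFS E M)
    {F F' S G : A ⥤ D}
    (e : F ⟶ F') (he : E (e.app (⊤_ A)))
    (m : S ⟶ G) (hmcart : IsCartesianNT m) (hm : M (m.app (⊤_ A)))
    (u : F ⟶ S) (v : F' ⟶ G) (huv : u ≫ m = e ≫ v) :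
    ∃! d : F' ⟶ S, e ≫ d = u ∧ d ≫ m = v :=
  stmt5_general E M h e he m hmcart hm u v huv
end

section
/- Let A be a category with pullbacks and D a category. If m : S ⟶ G is a cartesian natural transformation between functors S, G : A ⥤ D and G preserves pullbacks, then S preserves pullbacks. -/
open CategoryTheory Limits

universe v u v' u'

def PreservesPullbackSquares {A : Type u'} [Category.{v'} A] {D : Type u} [Category.{v} D]
    (F : A ⥤ D) : Prop :=
  ∀ {P X Y Z : A} (fst : P ⟶ X) (snd : P ⟶ Y) (f : X ⟶ Z) (g : Y ⟶ Z),
    IsPullback fst snd f g → IsPullback (F.map fst) (F.map snd) (F.map f) (F.map g)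

/-- By naturality, pasting the `m`-square of `snd` with the `G`-image square gives the same
rectangle as pasting the `S`-image square with the `m`-square of `f`; the pasting lemma then
cancels the pullback `m`-square of `f`. -/
theorem IsCartesianNT.isPullback_map_of_isPullback_map {A : Type u'} [Category.{v'} A]
    {D : Type u} [Category.{v} D] {S G : A ⥤ D} {m : S ⟶ G} (hm : IsCartesianNT m)
    {P X Y Z : A} {fst : P ⟶ X} {snd : P ⟶ Y} {f : X ⟶ Z} {g : Y ⟶ Z}
    (hsq : CommSq fst snd f g)
    (hG : IsPullback (G.map fst) (G.map snd) (G.map f) (G.map g)) :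
    IsPullback (S.map fst) (S.map snd) (S.map f) (S.map g) := by
  have rectangle := (hm snd).flip.paste_horiz hG
  rw [← m.naturality fst, ← m.naturality g] at rectangle
  exact rectangle.of_right (S.map_commSq hsq).w (hm f).flip

theorem stmt7_general {A : Type u'} [Category.{v'} A]
    {D : Type u} [Category.{v} D]
    {S G : A ⥤ D} (m : S ⟶ G) (hm : IsCartesianNT m)
    (hG : PreservesPullbackSquares G) :
    PreservesPullbackSquares S :=
  fun fst snd f g h => hm.isPullback_map_of_isPullback_map h.toCommSq (hG fst snd f g h)

/-- If `m : S ⟶ G` is a cartesian natural transformation and `G` preserves pullbacks,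
then `S` preserves pullbacks. -/
theorem stmt7 {A : Type u'} [Category.{v'} A] [HasPullbacks A]
    {D : Type u} [Category.{v} D]
    {S G : A ⥤ D} (m : S ⟶ G) (hm : IsCartesianNT m)
    (hG : PreservesPullbackSquares G) :
    PreservesPullbackSquares S :=
  stmt7_general m hm hG
end

section
/- Let D be a category with pullbacks and (E, M) a stable orthogonal factorization system on D, meaning that in any pullback square the pullback of an E-morphism along an arbitrary morphism is again an E-morphism. Let A be any category and let τ : F ⟶ G be a cartesian natural transformation between functors A ⥤ D that factors as τ = m ∘ e where e : F ⟶ S and m : S ⟶ G are natural transformations with e_X ∈ E and m_X ∈ M for every object X of A. Then both e and m are cartesian natural transformations. -/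
/-!
Orthogonality makes `E`/`M`-factorizations unique up to unique isomorphism, and it makes `M`
the class of maps with the right lifting property against `E`, so `M` is stable under pullback
just like `E`. For `f : X ⟶ Y`, let `P` be the pullback of `m_Y` along `G f`. Pasting shows
that the comparison map `F X ⟶ P` is a pullback of `e_Y`, so it lies in `E`, and the projection
`P ⟶ G X` is a pullback of `m_Y`, so it lies in `M`. This gives a second `E`/`M`-factorization
of `τ_X`, and the comparison map `S X ⟶ P` between the two factorizations is an isomorphism.
Hence the naturality squares of `m` are pullbacks; those of `e` are pullbacks by the pasting
lemma.
-/

open CategoryTheory Limits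

universe v u v' u'

open MorphismProperty

namespace IsOFS

variable {C : Type u} [Category.{v} C] {E M : MorphismProperty C}

lemma hom_ext (h : IsOFS E M) {X Y X' Y' : C} {e : X ⟶ Y} {m : X' ⟶ Y'} (he : E e) (hm : M m)
    {d₁ d₂ : Y ⟶ X'} (h₁ : e ≫ d₁ = e ≫ d₂) (h₂ : d₁ ≫ m = d₂ ≫ m) : d₁ = d₂ :=
  (h.orth e m (e ≫ d₂) (d₂ ≫ m) he hm (by simp)).unique ⟨h₁, h₂⟩ ⟨rfl, rfl⟩

lemma isIso_of_fac (h : IsOFS E M) {X Y Z Y' : C} {e : X ⟶ Y} {m : Y ⟶ Z} {e' : X ⟶ Y'}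
    {m' : Y' ⟶ Z} (he : E e) (hm : M m) (he' : E e') (hm' : M m') {u : Y ⟶ Y'}
    (hu₁ : e ≫ u = e') (hu₂ : u ≫ m' = m) : IsIso u := by
  obtain ⟨d, ⟨hd₁, hd₂⟩, -⟩ := h.orth e' m e m' he' hm (by rw [← hu₁, Category.assoc, hu₂])
  refine ⟨d, h.hom_ext he hm ?_ ?_, h.hom_ext he' hm' ?_ ?_⟩
  · rw [reassoc_of% hu₁, hd₁, Category.comp_id]
  · rw [Category.assoc, hd₂, hu₂, Category.id_comp]
  · rw [reassoc_of% hd₁, hu₁, Category.comp_id]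
  · rw [Category.assoc, hu₂, hd₂, Category.id_comp]

lemma rlp_eq (h : IsOFS E M) : E.rlp = M := by
  apply le_antisymm
  · intro X Y f hf
    obtain ⟨Z, e, m, he, hm, rfl⟩ := h.fac f
    have := hf e he
    let sq : CommSq (𝟙 X) e (e ≫ m) m := ⟨Category.id_comp _⟩
    have hd₁ : e ≫ sq.lift = 𝟙 X := sq.fac_left
    have hd₂ : sq.lift ≫ e ≫ m = m := sq.fac_right
    have : IsIso e := ⟨sq.lift, hd₁, h.hom_ext he hm (by simp only [reassoc_of% hd₁, Category.comp_id])
      (by rw [Category.assoc, hd₂, Category.id_comp])⟩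
    exact h.compM _ _ (h.isoM e this) hm
  · intro X' Y' m hm X Y e he
    refine ⟨fun {u v} sq => ?_⟩
    obtain ⟨d, ⟨hd₁, hd₂⟩, -⟩ := h.orth e m u v he hm sq.w
    exact ⟨⟨{ l := d, fac_left := hd₁, fac_right := hd₂ }⟩⟩

lemma isStableUnderBaseChange_right (h : IsOFS E M) : M.IsStableUnderBaseChange :=
  h.rlp_eq ▸ inferInstance

lemma isPullback_of_isPullback_comp (h : IsOFS E M) [E.IsStableUnderBaseChange]
    {X₁ X₂ Y₁ Y₂ Z₁ Z₂ : C} {a : X₁ ⟶ X₂} {b : Y₁ ⟶ Y₂} {c : Z₁ ⟶ Z₂}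
    {e₁ : X₁ ⟶ Y₁} {e₂ : X₂ ⟶ Y₂} {m₁ : Y₁ ⟶ Z₁} {m₂ : Y₂ ⟶ Z₂} [HasPullback m₂ c]
    (top : CommSq a e₁ e₂ b) (bot : CommSq b m₁ m₂ c)
    (big : IsPullback a (e₁ ≫ m₁) (e₂ ≫ m₂) c)
    (he₁ : E e₁) (he₂ : E e₂) (hm₁ : M m₁) (hm₂ : M m₂) : IsPullback b m₁ m₂ c := by
  have := h.isStableUnderBaseChange_right
  have pb := IsPullback.of_hasPullback m₂ c
  let u : Y₁ ⟶ pullback m₂ c := pullback.lift b m₁ bot.w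
  have hk : IsPullback a (e₁ ≫ u) e₂ (pullback.fst m₂ c) :=
    IsPullback.of_bot (by rwa [Category.assoc, pullback.lift_snd])
      (by rw [Category.assoc, pullback.lift_fst, top.w]) pb
  have : IsIso u := h.isIso_of_fac he₁ hm₁ (of_isPullback hk he₂) (of_isPullback pb hm₂) rfl
    (pullback.lift_snd _ _ _)
  exact IsPullback.of_iso_pullback bot (asIso u) (pullback.lift_fst _ _ _)
    (pullback.lift_snd _ _ _)

end IsOFS

lemma IsCartesianNT.of_comp {A : Type u'} [Category.{v'} A] {D : Type u} [Category.{v} D]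
    {F S G : A ⥤ D} {e : F ⟶ S} {m : S ⟶ G} (hτ : IsCartesianNT (e ≫ m))
    (hm : IsCartesianNT m) : IsCartesianNT e := fun f =>
  IsPullback.of_bot (by simpa using hτ f) (e.naturality f) (hm f)

/-- If `(E, M)` is a stable orthogonal factorization system on `D` (pullbacks of
`E`-morphisms are in `E`) and a cartesian natural transformation `τ` factors componentwise
as an `E`-transformation `e` followed by an `M`-transformation `m`, then both `e` and `m`
are cartesian. -/
theorem stmt8 {A : Type u'} [Category.{v'} A]
    {D : Type u} [Category.{v} D] [HasPullbacks D]
    (E M : MorphismProperty D) (h : IsOFS E M)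
    (hstable : ∀ {P X Y Z : D} (fst : P ⟶ X) (snd : P ⟶ Y) (f : X ⟶ Z) (g : Y ⟶ Z),
      IsPullback fst snd f g → E f → E snd)
    {F S G : A ⥤ D} (e : F ⟶ S) (m : S ⟶ G)
    (hτ : IsCartesianNT (e ≫ m))
    (heE : ∀ X : A, E (e.app X)) (hmM : ∀ X : A, M (m.app X)) :
    IsCartesianNT e ∧ IsCartesianNT m := by
  have : E.IsStableUnderBaseChange := ⟨fun sq => hstable _ _ _ _ sq⟩
  have hm : IsCartesianNT m := fun f =>
    h.isPullback_of_isPullback_comp ⟨e.naturality f⟩ ⟨m.naturality f⟩ (by simpa using hτ f)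
      (heE _) (heE _) (hmM _) (hmM _)
  exact ⟨hτ.of_comp hm, hm⟩
end

section
/- Let (C, I, ⊗) be a monoidal category with finite products, (E, M) an orthogonal factorization system on C, and (T, η, μ) a monoid object in C. Let φ : T^n → T (where T^n is the n-fold product) be an n-ary algebraic operation for T, i.e. μ ∘ (φ ⊗ id_T) = φ ∘ (∏_i μ) ∘ ⟨π_i ⊗ id_T⟩_i : T^n ⊗ T → T. Let s : S → T, r_i : R_i → T (for i = 1, …, n) and m' : K' → T be morphisms with m' ∈ M; let p : ∏_i R_i → R' and r' : R' → T satisfy r' ∘ p = φ ∘ ∏_i r_i; let q_i : R_i ⊗ S → K_i and m_i : K_i → T satisfy m_i ∘ q_i = μ ∘ (r_i ⊗ s); and let q' : R' ⊗ S → K' satisfy m' ∘ q' = μ ∘ (r' ⊗ s). If the composite (∏_i q_i) ∘ ⟨π_i ⊗ id_S⟩_i : (∏_i R_i) ⊗ S → ∏_i K_i lies in E, then there exists a unique morphism ψ : ∏_i K_i → K' such that ψ ∘ (∏_i q_i) ∘ ⟨π_i ⊗ id_S⟩_i = q' ∘ (p ⊗ id_S) and m' ∘ ψ = φ ∘ ∏_i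 m_i. -/
open CategoryTheory MonoidalCategory Limits

universe v u

/-!
The operation axiom for `φ`, combined with the factorizations `mᵢ ∘ qᵢ = μ ∘ (rᵢ ⊗ s)` and
`m' ∘ q' = μ ∘ (r' ⊗ s)`, makes the square with sides `(∏ᵢ qᵢ) ∘ ⟨πᵢ ⊗ id_S⟩ᵢ` (in `E`),
`q' ∘ (p ⊗ id_S)`, `m'` (in `M`) and `φ ∘ ∏ᵢ mᵢ` commute; `ψ` is its unique diagonal filler.
-/

section AlgebraicOperation

variable {C : Type u} [Category.{v} C] [MonoidalCategory C] {ι : Type*}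

noncomputable abbrev piTensorComparison (X : ι → C) (S : C) [HasProduct X]
    [HasProduct fun i => X i ⊗ S] :
    (∏ᶜ X) ⊗ S ⟶ ∏ᶜ fun i => X i ⊗ S :=
  Pi.lift fun i => Pi.π X i ⊗ₘ 𝟙 S

lemma piTensorComparison_naturality {X Y : ι → C} {S S' : C} [HasProduct X] [HasProduct Y]
    [HasProduct fun i => X i ⊗ S] [HasProduct fun i => Y i ⊗ S'] (f : ∀ i, X i ⟶ Y i)
    (g : S ⟶ S') :
    (Limits.Pi.map f ⊗ₘ g) ≫ piTensorComparison Y S' =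
      piTensorComparison X S ≫ Limits.Pi.map fun i => f i ⊗ₘ g := by
  ext i
  simp only [Category.assoc, Pi.lift_π, Pi.lift_π_assoc, Limits.Pi.map_π,
    tensorHom_comp_tensorHom, Category.comp_id, Category.id_comp]

def IsAlgebraicOperation {T : C} (μ : T ⊗ T ⟶ T) [HasProduct fun _ : ι => T]
    [HasProduct fun _ : ι => T ⊗ T] (φ : (∏ᶜ fun _ : ι => T) ⟶ T) : Prop :=
  (φ ⊗ₘ 𝟙 T) ≫ μ = piTensorComparison (fun _ => T) T ≫ Limits.Pi.map (fun _ => μ) ≫ φ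

lemma IsAlgebraicOperation.factorization_square_comm {T : C} {μ : T ⊗ T ⟶ T}
    [HasProduct fun _ : ι => T] [HasProduct fun _ : ι => T ⊗ T] {φ : (∏ᶜ fun _ : ι => T) ⟶ T}
    (hφ : IsAlgebraicOperation μ φ) {S : C} (s : S ⟶ T) {R K : ι → C} [HasProduct R]
    [HasProduct K] [HasProduct fun i => R i ⊗ S] (r : ∀ i, R i ⟶ T) {R' K' : C}
    (p : (∏ᶜ R) ⟶ R') (r' : R' ⟶ T) (hp : p ≫ r' = Limits.Pi.map r ≫ φ)
    (q : ∀ i, R i ⊗ S ⟶ K i) (m : ∀ i, K i ⟶ T) (hq : ∀ i, q i ≫ m i = (r i ⊗ₘ s) ≫ μ)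
    (q' : R' ⊗ S ⟶ K') (m' : K' ⟶ T) (hq' : q' ≫ m' = (r' ⊗ₘ s) ≫ μ) :
    ((p ⊗ₘ 𝟙 S) ≫ q') ≫ m' =
      (piTensorComparison R S ≫ Limits.Pi.map q) ≫ Limits.Pi.map m ≫ φ := by
  have hμ : (Limits.Pi.map fun i => r i ⊗ₘ s) ≫ Limits.Pi.map (fun _ => μ) =
      Limits.Pi.map q ≫ Limits.Pi.map m := by
    simp only [Limits.Pi.map_comp_map, hq]
  calc ((p ⊗ₘ 𝟙 S) ≫ q') ≫ m' = ((p ≫ r') ⊗ₘ s) ≫ μ := by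
        rw [Category.assoc, hq', tensorHom_comp_tensorHom_assoc, Category.id_comp]
    _ = (Limits.Pi.map r ⊗ₘ s) ≫ (φ ⊗ₘ 𝟙 T) ≫ μ := by
        rw [hp, tensorHom_comp_tensorHom_assoc, Category.comp_id]
    _ = (piTensorComparison R S ≫ Limits.Pi.map q) ≫ Limits.Pi.map m ≫ φ := by
        rw [hφ, reassoc_of% piTensorComparison_naturality, reassoc_of% hμ, Category.assoc]

end AlgebraicOperation

/-- Key lemma on grading algebraic operations: given an `n`-ary algebraic operation `φ` for
a monoid `T`, with the data of grades and factorizations as in the paper, if the comparison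
morphism `(∏ᵢ qᵢ) ∘ ⟨πᵢ ⊗ id_S⟩ᵢ` lies in `E`, then there is a unique morphism
`ψ : ∏ᵢ Kᵢ ⟶ K'` compatible with the factorizations and with `φ`. -/
theorem stmt11 {C : Type u} [Category.{v} C] [MonoidalCategory C] [HasFiniteProducts C]
    (E M : MorphismProperty C) (h : IsOFS E M)
    (T : Mon C) {n : ℕ}
    (φ : (∏ᶜ fun _ : Fin n => T.X) ⟶ T.X)
    (hφ : (φ ⊗ₘ 𝟙 T.X) ≫ MonObj.mul (X := T.X)
        = Limits.Pi.lift (fun i => Limits.Pi.π (fun _ : Fin n => T.X) i ⊗ₘ 𝟙 T.X)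
            ≫ Limits.Pi.map (fun _ : Fin n => MonObj.mul (X := T.X)) ≫ φ)
    {S : C} (s : S ⟶ T.X)
    {R : Fin n → C} (r : ∀ i, R i ⟶ T.X)
    {K' : C} (m' : K' ⟶ T.X) (hm' : M m')
    {R' : C} (p : (∏ᶜ R) ⟶ R') (r' : R' ⟶ T.X)
    (hp : p ≫ r' = Limits.Pi.map r ≫ φ)
    {K : Fin n → C} (q : ∀ i, (R i ⊗ S : C) ⟶ K i) (m : ∀ i, K i ⟶ T.X)
    (hq : ∀ i, q i ≫ m i = (r i ⊗ₘ s) ≫ MonObj.mul (X := T.X))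
    (q' : R' ⊗ S ⟶ K')
    (hq' : q' ≫ m' = (r' ⊗ₘ s) ≫ MonObj.mul (X := T.X))
    (hE : E (Limits.Pi.lift (fun i => Limits.Pi.π R i ⊗ₘ 𝟙 S) ≫ Limits.Pi.map q)) :
    ∃! ψ : (∏ᶜ K) ⟶ K',
      (Limits.Pi.lift (fun i => Limits.Pi.π R i ⊗ₘ 𝟙 S) ≫ Limits.Pi.map q) ≫ ψ = (p ⊗ₘ 𝟙 S) ≫ q'
        ∧ ψ ≫ m' = Limits.Pi.map m ≫ φ := by
  exact h.orth _ m' _ _ hE hm'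
    (IsAlgebraicOperation.factorization_square_comm hφ s r p r' hp q m hq q' m' hq')
end

section
/- Let S : Type u ⥤ Type u be a functor and s : S ⟶ 𝟭(Type u) a natural transformation to the identity functor such that every component s_X : S X → X is injective. If there exists a type X₀ such that S X₀ is nonempty, then every component s_X is bijective. -/
open CategoryTheory

universe u

theorem NatTrans.app_map_const_apply {S : Type u ⥤ Type u} (s : S ⟶ 𝟭 (Type u)) {X₀ X : Type u}
    (x₀ : S.obj X₀) (x : X) : s.app X (S.map (TypeCat.ofHom fun _ => x) x₀) = x := by
  have := NatTrans.naturality_apply s (TypeCat.ofHom fun _ : X₀ => x) x₀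
  simp_all

theorem NatTrans.surjective_app {S : Type u ⥤ Type u} (s : S ⟶ 𝟭 (Type u))
    {X₀ : Type u} (x₀ : S.obj X₀) (X : Type u) : Function.Surjective (s.app X) :=
  fun x => ⟨_, NatTrans.app_map_const_apply s x₀ x⟩

/-- A componentwise-injective natural transformation `s : S ⟶ Id` whose domain is somewhere
nonempty has all components bijective. -/
theorem stmt12 {S : Type u ⥤ Type u} (s : S ⟶ 𝟭 (Type u))
    (hinj : ∀ X : Type u, Function.Injective (s.app X))
    (h : ∃ X₀ : Type u, Nonempty (S.obj X₀)) :
    ∀ X : Type u, Function.Bijective (s.app X) := by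
  obtain ⟨X₀, ⟨x₀⟩⟩ := h
  exact fun X => ⟨hinj X, NatTrans.surjective_app s x₀ X⟩
end

section
/- Let A be a type and F : Type u ⥤ Type u the endofunctor sending X to A × X (with functorial action (a, x) ↦ (a, f x)). Let S : Type u ⥤ Type u be a functor and s : S ⟶ F a natural transformation all of whose components are injective. Then there exists a set Σ ⊆ A such that for every type X, the range of s_X : S X → A × X equals { (a, x) : A × X | a ∈ Σ }. -/
open CategoryTheory

universe u

/-- The endofunctor `X ↦ A × X` on `Type u`. -/
def prodF (A : Type u) : Type u ⥤ Type u where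
  obj X := A × X
  map f := TypeCat.ofHom (fun p => (p.1, f p.2))

/-!
The label `(s.app X t).1 ∈ A` is preserved by every `S.map f`, while the second component is
moved along `f`. Pushing forward along `X → PUnit` shows that every label occurs over `PUnit`;
pushing forward along the constant map `PUnit → X` at `x` shows that every label `a` occurring
over `PUnit` occurs together with every `x : X`. So `Σ` is the set of labels over `PUnit`.
-/

namespace prodF

variable {A : Type u} {S : Type u ⥤ Type u} (s : S ⟶ prodF A)

lemma app_map {X Y : Type u} (f : X ⟶ Y) (t : S.obj X) :
    s.app Y (S.map f t) = ((s.app X t).1, f (s.app X t).2) :=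
  ConcreteCategory.congr_hom (s.naturality f) t

lemma fst_app_mem_range {X : Type u} (t : S.obj X) :
    (s.app X t).1 ∈ Set.range (Prod.fst ∘ s.app PUnit) :=
  ⟨S.map (TypeCat.ofHom fun _ => PUnit.unit) t, congrArg Prod.fst (app_map s _ t)⟩

lemma mk_mem_range_app {X : Type u} {a : A} (ha : a ∈ Set.range (Prod.fst ∘ s.app PUnit))
    (x : X) : (a, x) ∈ Set.range (s.app X) := by
  obtain ⟨t, rfl⟩ := ha
  exact ⟨S.map (TypeCat.ofHom fun _ => x) t, app_map s _ t⟩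

end prodF

theorem stmt13_general (A : Type u) {S : Type u ⥤ Type u} (s : S ⟶ prodF A) :
    ∃ Sig : Set A, ∀ X : Type u,
      Set.range (s.app X) = {p : A × X | p.1 ∈ Sig} := by
  refine ⟨Set.range (Prod.fst ∘ s.app PUnit), fun X => ?_⟩
  ext p
  constructor
  · rintro ⟨t, rfl⟩
    exact prodF.fst_app_mem_range s t
  · exact fun hp => prodF.mk_mem_range_app s hp p.2

/-- Every subfunctor of `A × (−)` is given by a subset `Σ ⊆ A`: the range of each component
of the inclusion consists of the pairs whose first component lies in `Σ`. -/
theorem stmt13 (A : Type u) {S : Type u ⥤ Type u} (s : S ⟶ prodF A)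
    (hinj : ∀ X : Type u, Function.Injective (s.app X)) :
    ∃ Sig : Set A, ∀ X : Type u,
      Set.range (s.app X) = {p : A × X | p.1 ∈ Sig} :=
  stmt13_general A s
end

section
/- Let V be a nonempty type and F : Type u ⥤ Type u the endofunctor sending X to the function type V → X (with functorial action g ↦ f ∘ g). Let S : Type u ⥤ Type u be a functor and s : S ⟶ F a natural transformation all of whose components are injective. Then there exists a set Σ of equivalence relations (setoids) on V that is upward closed — if R ∈ Σ and R' is an equivalence relation with R v v' implying R' v v' for all v, v', then R' ∈ Σ — such that for every type X, the range of s_X : S X → (V → X) equals { f : V → X | ∃ R ∈ Σ, ∀ v v', R v v' → f v = f v' }. -/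
open CategoryTheory

universe u

/-- The reader endofunctor `X ↦ (V → X)` on `Type u`. -/
def readerF (V : Type u) : Type u ⥤ Type u where
  obj X := V → X
  map f := TypeCat.ofHom (fun g => f ∘ g)

/-! The range of any natural transformation into `readerF V` is closed under postcomposition,
so it is determined by which quotient maps `V → V ⧸ R` it contains: a function `f` lies in it
iff `f` factors through such a quotient map, and the quotient map of `ker f` factors through
`f` itself, via `invFun f`. -/

section

variable {V : Type u} {S : Type u ⥤ Type u} (s : S ⟶ readerF V)

theorem readerF_app_map {X Y : Type u} (g : X → Y) (t : S.obj X) :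
    s.app Y (S.map (TypeCat.ofHom g) t) = g ∘ s.app X t :=
  CategoryTheory.congr_fun (s.naturality (TypeCat.ofHom g)) t

theorem comp_mem_range_app {X Y : Type u} (g : X → Y) {f : V → X}
    (hf : f ∈ Set.range (s.app X)) : g ∘ f ∈ Set.range (s.app Y) := by
  obtain ⟨t, rfl⟩ := hf
  exact ⟨S.map (TypeCat.ofHom g) t, readerF_app_map s g t⟩

def rangeSetoids : Set (Setoid V) :=
  {R | (Quotient.mk R : V → Quotient R) ∈ Set.range (s.app (Quotient R))}

theorem mem_rangeSetoids_of_le {R R' : Setoid V} (hR : R ∈ rangeSetoids s) (h : R ≤ R') :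
    R' ∈ rangeSetoids s :=
  comp_mem_range_app s (Quotient.map' id h) hR

theorem mem_range_app_of_mem_rangeSetoids {X : Type u} {f : V → X} {R : Setoid V}
    (hR : R ∈ rangeSetoids s) (hf : ∀ v v' : V, R v v' → f v = f v') :
    f ∈ Set.range (s.app X) :=
  comp_mem_range_app s (Quotient.lift f hf) hR

theorem ker_mem_rangeSetoids [Nonempty V] {X : Type u} {f : V → X}
    (hf : f ∈ Set.range (s.app X)) : Setoid.ker f ∈ rangeSetoids s := by
  have hfactor : (Quotient.mk (Setoid.ker f) : V → _) =
      (Quotient.mk (Setoid.ker f) ∘ Function.invFun f) ∘ f := by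
    funext v
    exact Quotient.sound (Function.invFun_eq (f := f) ⟨v, rfl⟩).symm
  change _ ∈ Set.range _
  rw [hfactor]
  exact comp_mem_range_app s _ hf

end

theorem stmt14_general (V : Type u) [Nonempty V] {S : Type u ⥤ Type u} (s : S ⟶ readerF V) :
    ∃ Sig : Set (Setoid V),
      (∀ R ∈ Sig, ∀ R' : Setoid V, (∀ v v' : V, R.r v v' → R'.r v v') → R' ∈ Sig) ∧
      (∀ X : Type u,
        Set.range (s.app X) = {f : V → X | ∃ R ∈ Sig, ∀ v v' : V, R.r v v' → f v = f v'}) := by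
  refine ⟨rangeSetoids s, fun R hR R' h => mem_rangeSetoids_of_le s hR h, fun X => ?_⟩
  ext f
  constructor
  · exact fun hf => ⟨Setoid.ker f, ker_mem_rangeSetoids s hf, fun _ _ h => h⟩
  · exact fun ⟨R, hR, hf⟩ => mem_range_app_of_mem_rangeSetoids s hR hf

/-- Every subfunctor of the reader functor `V → (−)` (for nonempty `V`) is given by an
upward-closed set `Σ` of equivalence relations on `V`: the range of each component of the
inclusion consists of the functions respecting some relation in `Σ`. -/
theorem stmt14 (V : Type u) [Nonempty V] {S : Type u ⥤ Type u} (s : S ⟶ readerF V)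
    (hinj : ∀ X : Type u, Function.Injective (s.app X)) :
    ∃ Sig : Set (Setoid V),
      (∀ R ∈ Sig, ∀ R' : Setoid V, (∀ v v' : V, R.r v v' → R'.r v v') → R' ∈ Sig) ∧
      (∀ X : Type u,
        Set.range (s.app X) = {f : V → X | ∃ R ∈ Sig, ∀ v v' : V, R.r v v' → f v = f v'}) :=
  stmt14_general V s
end

section
/- Let V be a nonempty type and F : Type u ⥤ Type u the endofunctor sending X to V → (V × X) (the underlying functor of the state monad, with functorial action g ↦ (fun v => ((g v).1, f (g v).2))). Let S : Type u ⥤ Type u be a functor and s : S ⟶ F a natural transformation all of whose components are injective. Then there exists a set Σ of pairs (p, R), where p : V → V and R is an equivalence relation on V, such that for each p the set { R | (p, R) ∈ Σ } is upward closed (if (p, R) ∈ Σ and R v v' implies R' v v' for all v, v', then (p, R') ∈ Σ), and for every type X the range of s_X : S X → (V → V × X) equals { f : V → V × X | ∃ (p, R) ∈ Σ, (∀ v, (f v).1 = p v) ∧ (∀ v v', R v v' → (f v).2 = (f v').2) }. -/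
/-!
A natural transformation `s : S ⟶ stateF V` is determined on ranges by its "generic" elements
`v ↦ (p v, ⟦v⟧)` in `V → V × V/R`. Every `f : V → V × X` whose second component respects `R`
is the image of the generic element for `(fst ∘ f, R)` under `V/R → X`, and conversely the
generic element for `(fst ∘ f, ker (snd ∘ f))` is the image of `f` under a map `X → V/R`
inverting `snd ∘ f` on its range. By naturality, ranges of `s` are stable under these maps,
so `Σ` can be taken to be the set of `(p, R)` whose generic element lies in the range of `s`.
-/

open CategoryTheory

universe u

/-- The state endofunctor `X ↦ (V → V × X)` on `Type u`. -/
def stateF (V : Type u) : Type u ⥤ Type u where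
  obj X := V → V × X
  map f := TypeCat.ofHom fun g => fun v => ((g v).1, f (g v).2)

theorem CategoryTheory.NatTrans.map_mem_range_app {C : Type*} [Category C]
    {S F : C ⥤ Type u} (s : S ⟶ F) {X Y : C} (g : X ⟶ Y) {x : F.obj X}
    (hx : x ∈ Set.range (s.app X)) :
    F.map g x ∈ Set.range (s.app Y) := by
  obtain ⟨a, rfl⟩ := hx
  exact ⟨S.map g a, NatTrans.naturality_apply s g a⟩

namespace stateF

variable {V : Type u}

def generic (p : V → V) (R : Setoid V) : (stateF V).obj (Quotient R) :=
  fun v => (p v, Quotient.mk R v)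

theorem map_lift_generic {X : Type u} {f : V → V × X} {p : V → V} (hp : ∀ v, (f v).1 = p v)
    {R : Setoid V} (hR : ∀ v v', R v v' → (f v).2 = (f v').2) :
    (stateF V).map (TypeCat.ofHom (Quotient.lift (fun v => (f v).2) hR)) (generic p R) = f :=
  funext fun v => Prod.ext (hp v).symm rfl

theorem map_invFun_eq_generic [Nonempty V] {X : Type u} (f : V → V × X) :
    (stateF V).map (TypeCat.ofHom (Quotient.mk _ ∘ Function.invFun fun v => (f v).2)) f =
      generic (fun v => (f v).1) (Setoid.ker fun v => (f v).2) :=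
  funext fun v => Prod.ext rfl <| Quotient.sound <| Setoid.ker_def.mpr <|
    Function.invFun_eq (f := fun v => (f v).2) ⟨v, rfl⟩

theorem mem_range_app_iff [Nonempty V] {S : Type u ⥤ Type u} (s : S ⟶ stateF V) {X : Type u}
    (f : V → V × X) :
    f ∈ Set.range (s.app X) ↔ ∃ pR : (V → V) × Setoid V,
      generic pR.1 pR.2 ∈ Set.range (s.app _) ∧ (∀ v, (f v).1 = pR.1 v) ∧
        ∀ v v', pR.2 v v' → (f v).2 = (f v').2 := by
  constructor
  · intro hf
    refine ⟨((fun v => (f v).1), Setoid.ker fun v => (f v).2), ?_, fun _ => rfl,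
      fun _ _ => Setoid.ker_def.mp⟩
    rw [← map_invFun_eq_generic]
    exact NatTrans.map_mem_range_app s _ hf
  · rintro ⟨⟨p, R⟩, hgen, hp, hR⟩
    rw [← map_lift_generic hp hR]
    exact NatTrans.map_mem_range_app s _ hgen

end stateF

theorem stmt15_general (V : Type u) [Nonempty V] {S : Type u ⥤ Type u} (s : S ⟶ stateF V) :
    ∃ Sig : Set ((V → V) × Setoid V),
      (∀ (p : V → V) (R R' : Setoid V), (p, R) ∈ Sig →
        (∀ v v' : V, R.r v v' → R'.r v v') → (p, R') ∈ Sig) ∧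
      (∀ X : Type u,
        (Set.range (s.app X) : Set (V → V × X)) =
          {f : V → V × X | ∃ pR ∈ Sig, (∀ v : V, (f v).1 = pR.1 v) ∧
            (∀ v v' : V, pR.2.r v v' → (f v).2 = (f v').2)}) := by
  refine ⟨{pR | stateF.generic pR.1 pR.2 ∈ Set.range (s.app _)}, ?_, ?_⟩
  · intro p R R' hR hle
    exact (stateF.mem_range_app_iff s _).mpr
      ⟨(p, R), hR, fun _ => rfl, fun v v' h => Quotient.sound (hle v v' h)⟩
  · intro X
    ext f
    exact stateF.mem_range_app_iff s f

/-- Every subfunctor of the state functor `V → V × (−)` (for nonempty `V`) is given by a set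
`Σ` of pairs of a function `p : V → V` and an equivalence relation on `V`, upward closed in
the second component: the range of each component of the inclusion consists of the maps
`f : V → V × X` whose first projection is some `p` and whose second projection respects
some `R` with `(p, R) ∈ Σ`. -/
theorem stmt15 (V : Type u) [Nonempty V] {S : Type u ⥤ Type u} (s : S ⟶ stateF V)
    (hinj : ∀ X : Type u, Function.Injective (s.app X)) :
    ∃ Sig : Set ((V → V) × Setoid V),
      (∀ (p : V → V) (R R' : Setoid V), (p, R) ∈ Sig →
        (∀ v v' : V, R.r v v' → R'.r v v') → (p, R') ∈ Sig) ∧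
      (∀ X : Type u,
        (Set.range (s.app X) : Set (V → V × X)) =
          {f : V → V × X | ∃ pR ∈ Sig, (∀ v : V, (f v).1 = pR.1 v) ∧
            (∀ v v' : V, pR.2.r v v' → (f v).2 = (f v').2)}) :=
  stmt15_general V s
end

section
/- Let V be a partial order. The following are equivalent: (1) for every surjective monotone map e : X →o Y between partial orders, the postcomposition map (V →o X) → (V →o Y), g ↦ e ∘ g, is surjective; (2) V is discrete, i.e. for all a, b : V, a ≤ b implies a = b. -/
universe u

def WithDiscreteOrder (α : Type u) : Type u := α

namespace WithDiscreteOrder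

variable {α : Type u}

instance : PartialOrder (WithDiscreteOrder α) where
  le := Eq
  le_refl := Eq.refl
  le_trans _ _ _ := Eq.trans
  le_antisymm _ _ h _ := h

theorem le_iff_eq {a b : WithDiscreteOrder α} : a ≤ b ↔ a = b := Iff.rfl

def toOrder [Preorder α] : WithDiscreteOrder α →o α :=
  ⟨fun a => a, fun _ _ h => le_of_eq (le_iff_eq.mp h)⟩

theorem toOrder_surjective [Preorder α] : Function.Surjective (toOrder (α := α)) :=
  fun a => ⟨a, rfl⟩

end WithDiscreteOrder

theorem OrderHom.comp_surjective_of_forall_le_imp_eq {V X Y : Type*} [Preorder V] [Preorder X]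
    [Preorder Y] (hV : ∀ a b : V, a ≤ b → a = b) {e : X →o Y} (he : Function.Surjective e) :
    Function.Surjective (fun g : V →o X => e.comp g) := by
  choose s hs using he
  intro f
  refine ⟨⟨fun v => s (f v), fun a b hab => ?_⟩, OrderHom.ext _ _ (funext fun v => hs (f v))⟩
  rw [hV a b hab]

/-- Surjective monotone maps between partial orders are closed under postcomposition
`(V →o X) → (V →o Y)` for every partial order `V` if and only if `V` is discrete. -/
theorem stmt18 {V : Type u} [PartialOrder V] :
    (∀ {X Y : Type u} [PartialOrder X] [PartialOrder Y] (e : X →o Y),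
        Function.Surjective e →
        Function.Surjective (fun g : V →o X => e.comp g))
      ↔ (∀ a b : V, a ≤ b → a = b) := by
  constructor
  · intro H a b hab
    -- lifting `id : V →o V` through the identity `WithDiscreteOrder V →o V` forces `V` to be discrete
    obtain ⟨h, hh⟩ := H WithDiscreteOrder.toOrder WithDiscreteOrder.toOrder_surjective OrderHom.id
    have hab' : h a = h b := WithDiscreteOrder.le_iff_eq.mp (h.monotone hab)
    calc a = WithDiscreteOrder.toOrder (h a) := (DFunLike.congr_fun hh a).symm
      _ = WithDiscreteOrder.toOrder (h b) := by rw [hab']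
      _ = b := DFunLike.congr_fun hh b
  · intro hV X Y _ _ e he
    exact OrderHom.comp_surjective_of_forall_le_imp_eq hV he
end

section
/- On the category of partial orders and monotone maps, the surjective monotone maps and the full monotone maps form an orthogonal factorization system: (a) every monotone map f : X →o Y factors as f = m ∘ e with e surjective monotone and m full monotone; (b) for all monotone maps e : X →o S (surjective), m : S' →o Y (full), u : X →o S', v : S →o Y with m ∘ u = v ∘ e, there exists a unique monotone map d : S →o S' such that d ∘ e = u and m ∘ d = v. -/
universe u

/-!
Every monotone map factors through its image with the induced order: the corestriction onto
the image is surjective and the inclusion is full. For orthogonality, fullness of `m` and the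
commuting square give `e x ≤ e x' → u x ≤ u x'`, so `u` descends along the surjection `e` to
a monotone map (well defined by antisymmetry in `S'`); it is unique because `e` is an
epimorphism.
-/

open Function

namespace OrderHom

variable {X S S' Y : Type*} [Preorder X] [Preorder S] [Preorder Y]

def Full [Preorder S'] (m : S' →o Y) : Prop :=
  ∀ a b, m a ≤ m b → a ≤ b

theorem full_subtypeVal (p : Y → Prop) : Full (Subtype.val p) :=
  fun _ _ h => h

def rangeFactorization (f : X →o Y) : X →o Set.range f :=
  ⟨Set.rangeFactorization f, fun _ _ h => f.monotone h⟩

theorem rangeFactorization_surjective (f : X →o Y) : Surjective f.rangeFactorization :=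
  Set.rangeFactorization_surjective

theorem subtypeVal_comp_rangeFactorization (f : X →o Y) :
    (Subtype.val _).comp f.rangeFactorization = f :=
  rfl

theorem comp_injective_of_surjective [Preorder S'] {e : X →o S} (he : Surjective e) :
    Injective fun d : S →o S' => d.comp e := fun _ _ h =>
  ext _ _ (he.injective_comp_right (congrArg (⇑) h))

theorem le_of_full_of_comp_eq [Preorder S'] {e : X →o S} {m : S' →o Y} {u : X →o S'}
    {v : S →o Y} (hm : Full m) (h : m.comp u = v.comp e) {x x' : X} (hx : e x ≤ e x') :
    u x ≤ u x' :=
  hm _ _ <| by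
    change m.comp u x ≤ m.comp u x'
    rw [h]
    exact v.monotone hx

section Descend

variable [PartialOrder S'] (e : X →o S) (he : Surjective e) (u : X →o S')
  (hu : ∀ x x', e x ≤ e x' → u x ≤ u x')

noncomputable def descend : S →o S' :=
  ⟨u ∘ surjInv he, fun s s' h => hu _ _ (by rwa [surjInv_eq he, surjInv_eq he])⟩

theorem descend_comp : (descend e he u hu).comp e = u :=
  ext _ _ <| funext fun x =>
    le_antisymm (hu _ _ (surjInv_eq he (e x)).le) (hu _ _ (surjInv_eq he (e x)).ge)

end Descend

theorem existsUnique_diagonal_of_surjective_of_full [PartialOrder S'] {e : X →o S}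
    {m : S' →o Y} {u : X →o S'} {v : S →o Y} (he : Surjective e) (hm : Full m)
    (h : m.comp u = v.comp e) : ∃! d : S →o S', d.comp e = u ∧ m.comp d = v := by
  have hu : ∀ x x', e x ≤ e x' → u x ≤ u x' := fun _ _ => le_of_full_of_comp_eq hm h
  have hd := descend_comp e he u hu
  refine ⟨descend e he u hu, ⟨hd, comp_injective_of_surjective he ?_⟩,
    fun d hd' => comp_injective_of_surjective he (hd'.1.trans hd.symm)⟩
  change m.comp ((descend e he u hu).comp e) = v.comp e
  rw [hd, h]

end OrderHom

/-- On partial orders and monotone maps, surjective monotone maps and full monotone maps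
form an orthogonal factorization system: (a) every monotone map factors as a surjection
followed by a full map; (b) surjections are orthogonal to full maps. -/
theorem stmt19 :
    -- (a) factorization
    (∀ {X Y : Type u} [PartialOrder X] [PartialOrder Y] (f : X →o Y),
        ∃ (S : Type u) (_ : PartialOrder S) (e : X →o S) (m : S →o Y),
          Function.Surjective e ∧ (∀ a b : S, m a ≤ m b → a ≤ b) ∧ m.comp e = f) ∧
    -- (b) orthogonality
    (∀ {X S S' Y : Type u} [PartialOrder X] [PartialOrder S] [PartialOrder S']
        [PartialOrder Y]
        (e : X →o S) (m : S' →o Y) (u : X →o S') (v : S →o Y),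
        Function.Surjective e → (∀ a b : S', m a ≤ m b → a ≤ b) →
        m.comp u = v.comp e →
        ∃! d : S →o S', d.comp e = u ∧ m.comp d = v) := by
  refine ⟨fun f => ⟨_, inferInstance, f.rangeFactorization, OrderHom.Subtype.val _,
    f.rangeFactorization_surjective, OrderHom.full_subtypeVal _,
    f.subtypeVal_comp_rangeFactorization⟩, ?_⟩
  intro _ _ _ _ _ _ _ _ e m u v he hm h
  exact OrderHom.existsUnique_diagonal_of_surjective_of_full he hm h
end
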